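/- Let a, b be C^1 functions on an interval, z > 0 with a(z) = z·b(z), and suppose there exists a nonnegative continuous function r such that z·b(x) − a(x) = −r(x)·(z − x). Let A, B be primitives of a, b with A(z) = 0 = B(z). Then along solutions of the system x' = y − x, y' = a(x)y − b(x)y², with b ≥ 0 and y > 0, the function V(x,y) = z·B(x) − A(x) + y − z − z·log(y/z) satisfies dV/dt = −b(x)(y − z)² − r(x)(z − x)² ≤ 0. -/

import Mathlib

/-! With `r (z - u) = a u - z b u`, the cross terms of `dV/dt` cancel against the `a`-terms,
leaving the two squares `-b (y - z)² - r (z - x)²`, each nonpositive since `b, r ≥ 0`. -/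

theorem HasDerivAt.log_div_const {y : ℝ → ℝ} {y' t z : ℝ} (hy : HasDerivAt y y' t)
    (hyt : y t ≠ 0) (hz : z ≠ 0) :
    HasDerivAt (fun s => Real.log (y s / z)) (y' / y t) t := by
  convert (hy.div_const z).log (div_ne_zero hyt hz) using 1
  field_simp

theorem hasDerivAt_lyapunov {a b A B x y : ℝ → ℝ} {z t x' y' : ℝ}
    (hA : HasDerivAt A (a (x t)) (x t)) (hB : HasDerivAt B (b (x t)) (x t))
    (hx : HasDerivAt x x' t) (hy : HasDerivAt y y' t) (hyt : y t ≠ 0) (hz : z ≠ 0) :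
    HasDerivAt (fun s => z * B (x s) - A (x s) + y s - z - z * Real.log (y s / z))
      ((z * b (x t) - a (x t)) * x' + (1 - z / y t) * y') t :=
  ((((((hB.comp t hx).const_mul z).sub (hA.comp t hx)).add hy).sub
    (hasDerivAt_const t z)).sub ((hy.log_div_const hyt hz).const_mul z)).congr_deriv (by ring)

theorem lyapunov_rate_eq {a b r u v z : ℝ} (hid : z * b - a = -r * (z - u)) (hv : v ≠ 0) :
    (z * b - a) * (v - u) + (1 - z / v) * (a * v - b * v ^ 2)
      = -b * (v - z) ^ 2 - r * (z - u) ^ 2 := by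
  have hsplit : (1 - z / v) * (a * v - b * v ^ 2) = (v - z) * (a - b * v) := by
    field_simp
  rw [hsplit]
  linear_combination (z - u) * hid

theorem lyapunov_rate_nonpos {b r p q : ℝ} (hb : 0 ≤ b) (hr : 0 ≤ r) :
    -b * p ^ 2 - r * q ^ 2 ≤ 0 := by
  nlinarith [mul_nonneg hb (sq_nonneg p), mul_nonneg hr (sq_nonneg q)]

theorem lyapunov_general_general
    (a b A B r : ℝ → ℝ) (z : ℝ) (hz : 0 < z)
    (hr0 : ∀ u, 0 ≤ r u) (hb0 : ∀ u, 0 ≤ b u)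
    (hA : ∀ u, HasDerivAt A (a u) u) (hB : ∀ u, HasDerivAt B (b u) u)
    (hid : ∀ u, z * b u - a u = -(r u) * (z - u))
    (x y : ℝ → ℝ)
    (hx : ∀ t, HasDerivAt x (y t - x t) t)
    (hy : ∀ t, HasDerivAt y (a (x t) * y t - b (x t) * (y t) ^ 2) t)
    (hypos : ∀ t, 0 < y t) :
    ∀ t, HasDerivAt (fun s => z * B (x s) - A (x s) + y s - z - z * Real.log (y s / z))
        (-(b (x t)) * (y t - z) ^ 2 - r (x t) * (z - x t) ^ 2) t ∧
      -(b (x t)) * (y t - z) ^ 2 - r (x t) * (z - x t) ^ 2 ≤ 0 := by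
  intro t
  refine ⟨?_, lyapunov_rate_nonpos (hb0 _) (hr0 _)⟩
  rw [← lyapunov_rate_eq (hid (x t)) (hypos t).ne']
  exact hasDerivAt_lyapunov (hA _) (hB _) (hx t) (hy t) (hypos t).ne' hz.ne'

/-- The general Lyapunov function theorem: along solutions of
`x' = y - x`, `y' = a(x) y - b(x) y²`, with `z·b(x) - a(x) = -r(x)(z-x)`,
the function `V = z B(x) - A(x) + y - z - z log(y/z)` satisfies
`dV/dt = -b(x)(y-z)² - r(x)(z-x)² ≤ 0`. -/
theorem lyapunov_general
    (a b A B r : ℝ → ℝ) (z : ℝ) (hz : 0 < z)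
    (ha : ContDiff ℝ 1 a) (hb : ContDiff ℝ 1 b)
    (hr : Continuous r) (hr0 : ∀ u, 0 ≤ r u) (hb0 : ∀ u, 0 ≤ b u)
    (hzab : a z = z * b z)
    (hA : ∀ u, HasDerivAt A (a u) u) (hB : ∀ u, HasDerivAt B (b u) u)
    (hAz : A z = 0) (hBz : B z = 0)
    (hid : ∀ u, z * b u - a u = -(r u) * (z - u))
    (x y : ℝ → ℝ)
    (hx : ∀ t, HasDerivAt x (y t - x t) t)
    (hy : ∀ t, HasDerivAt y (a (x t) * y t - b (x t) * (y t) ^ 2) t)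
    (hypos : ∀ t, 0 < y t) :
    ∀ t, HasDerivAt (fun s => z * B (x s) - A (x s) + y s - z - z * Real.log (y s / z))
        (-(b (x t)) * (y t - z) ^ 2 - r (x t) * (z - x t) ^ 2) t ∧
      -(b (x t)) * (y t - z) ^ 2 - r (x t) * (z - x t) ^ 2 ≤ 0 :=
  lyapunov_general_general a b A B r z hz hr0 hb0 hA hB hid x y hx hy hypos
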